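/- Finiteness and nonemptiness of RAL# outcome sets: Let M be an RB-CGS# with Act finite, A a coalition of proponents, B a set of resource-bounded opponents with A ∪ B nonempty, F_A a strategy for A, η an endowment, and s a state. Then the set out(s, η, F_A, B) of maximal (η, F_A, B)-computations from s is finite and nonempty, and every (η, F_A, B)-computation from s is a prefix of some member of out(s, η, F_A, B). -/

import Mathlib

/-- A resource-bounded concurrent game structure with a diminishing resource (RB-CGS#). -/
structure RBCGS (Agt S Act Res : Type) where
  /-- available actions for each agent in each state -/
  d : S → Agt → Set Act
  d_ne : ∀ s a, (d s a).Nonempty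
  /-- cost function (negative = consumption, positive = production) -/
  cost : S → Act → Res → ℤ
  /-- the distinguished diminishing resource (the "first" resource) -/
  res1 : Res
  /-- every available action consumes at least one unit of the diminishing resource -/
  cost_first : ∀ s (a : Agt) (α : Act), α ∈ d s a → cost s α res1 ≤ -1
  /-- partial transition function on joint actions -/
  tr : S → (Agt → Act) → Option S

namespace RBCGS

variable {Agt S Act Res : Type}

/-- consumption of resource ρ by action α at state s : `|min(0, c(s,α))|`. -/
def consR (M : RBCGS Agt S Act Res) (s : S) (α : Act) (ρ : Res) : ℕ :=
  (min 0 (M.cost s α ρ)).natAbs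

/-- production of resource ρ by action α at state s : `max(0, c(s,α))`. -/
def prodR (M : RBCGS Agt S Act Res) (s : S) (α : Act) (ρ : Res) : ℕ :=
  (max 0 (M.cost s α ρ)).toNat

/-- σ is a (projection of a) joint action for coalition A at state s. -/
def JointAt (M : RBCGS Agt S Act Res) (A : Set Agt) (s : S) (σ : Agt → Act) : Prop :=
  ∀ a ∈ A, σ a ∈ M.d s a

/-- outcomes of a joint action of coalition A at state s. -/
def outA (M : RBCGS Agt S Act Res) (A : Set Agt) (s : S) (σA : Agt → Act) : Set S :=
  { s' | ∃ σ : Agt → Act, (∀ a, σ a ∈ M.d s a) ∧ (∀ a ∈ A, σ a = σA a) ∧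
    M.tr s σ = some s' }

variable [Inhabited S]

/-- F is a strategy for coalition A : on every nonempty history it prescribes a joint
action available to A at the last state of the history. -/
def Strategy (M : RBCGS Agt S Act Res) (A : Set Agt) (F : List S → Agt → Act) : Prop :=
  ∀ l : List S, l ≠ [] → M.JointAt A (l.getD (l.length - 1) default) (F l)

/-- l is a (finite, nonempty) computation starting at s consistent with strategy F
(the computation `λ[1..k]` is represented 0-based as `l[0..k-1]`). -/
def ConsistentFrom (M : RBCGS Agt S Act Res) (A : Set Agt) (F : List S → Agt → Act)
    (s : S) (l : List S) : Prop :=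
  l ≠ [] ∧ l.getD 0 default = s ∧
    ∀ i, i + 1 < l.length →
      l.getD (i + 1) default ∈ M.outA A (l.getD i default) (F (l.take (i + 1)))

/-- `eAvail M F b l i a ρ` is the amount `e_a(λ[i+1])` of resource ρ available to a
after i steps of l under strategy F with initial bound b. -/
def eAvail (M : RBCGS Agt S Act Res) (F : List S → Agt → Act)
    (b : Agt → Res → ℕ) (l : List S) : ℕ → Agt → Res → ℤ
  | 0 => fun a ρ => (b a ρ : ℤ)
  | i + 1 => fun a ρ =>
      eAvail M F b l i a ρ
        - (M.consR (l.getD i default) (F (l.take (i + 1)) a) ρ : ℤ)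
        + (M.prodR (l.getD i default) (F (l.take (i + 1)) a) ρ : ℤ)

/-- l is b-consistent with strategy F for coalition A. -/
def BConsistent (M : RBCGS Agt S Act Res) (A : Set Agt) (F : List S → Agt → Act)
    (b : Agt → Res → ℕ) (l : List S) : Prop :=
  ∀ a ∈ A, ∀ i, i + 1 < l.length → ∀ ρ,
    (M.consR (l.getD i default) (F (l.take (i + 1)) a) ρ : ℤ) ≤ M.eAvail F b l i a ρ

/-- l is a b-maximal computation from s consistent with F. -/
def BMaximal (M : RBCGS Agt S Act Res) (A : Set Agt) (F : List S → Agt → Act)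
    (b : Agt → Res → ℕ) (s : S) (l : List S) : Prop :=
  M.ConsistentFrom A F s l ∧ M.BConsistent A F b l ∧
    ¬ ∃ l' : List S, l <+: l' ∧ l.length < l'.length ∧
        M.ConsistentFrom A F s l' ∧ M.BConsistent A F b l'

/-- `out(s, F_A, b)` : the set of b-maximal computations from s consistent with F. -/
def outSet (M : RBCGS Agt S Act Res) (A : Set Agt) (F : List S → Agt → Act)
    (b : Agt → Res → ℕ) (s : S) : Set (List S) :=
  { l | M.BMaximal A F b s l }

end RBCGS

namespace RBCGS

variable {Agt S Act Res : Type} [Inhabited S]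

/-- An endowment assigns to each agent a vector of natural-number resource amounts. -/
abbrev Endow (Agt Res : Type) : Type := Agt → Res → ℕ

/-- `RalComp M A B F s η l` : l is an (η, F_A, B)-computation from s, i.e. a
resource-extended computation (a nonempty finite sequence of state–endowment pairs,
0-based) where A are the proponents following strategy F and B the resource-bounded
opponents. -/
def RalComp (M : RBCGS Agt S Act Res) (A B : Set Agt) (F : List S → Agt → Act)
    (s : S) (η : Endow Agt Res) (l : List (S × Endow Agt Res)) : Prop :=
  l ≠ [] ∧ l.getD 0 default = (s, η) ∧
    ∀ i, i + 1 < l.length → ∃ σ : Agt → Act,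
      (∀ a, σ a ∈ M.d (l.getD i default).1 a) ∧
      (∀ a ∈ A, σ a = F ((l.map Prod.fst).take (i + 1)) a) ∧
      M.tr (l.getD i default).1 σ = some (l.getD (i + 1) default).1 ∧
      (∀ a ∈ A ∪ B, ∀ ρ : Res,
        M.consR (l.getD i default).1 (σ a) ρ ≤ (l.getD i default).2 a ρ) ∧
      (∀ a ∈ A ∪ B, ∀ ρ : Res,
        ((l.getD (i + 1) default).2 a ρ : ℤ) =
          ((l.getD i default).2 a ρ : ℤ)
            + (M.prodR (l.getD i default).1 (σ a) ρ : ℤ)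
            - (M.consR (l.getD i default).1 (σ a) ρ : ℤ)) ∧
      (∀ a, a ∉ A ∪ B → ∀ ρ : Res,
        (l.getD (i + 1) default).2 a ρ = (l.getD i default).2 a ρ)

/-- `out(s, η, F_A, B)` : the set of maximal (η, F_A, B)-computations from s. -/
def ralOut (M : RBCGS Agt S Act Res) (A B : Set Agt) (F : List S → Agt → Act)
    (s : S) (η : Endow Agt Res) : Set (List (S × Endow Agt Res)) :=
  { l | M.RalComp A B F s η l ∧
      ¬ ∃ l', l <+: l' ∧ l.length < l'.length ∧ M.RalComp A B F s η l' }

end RBCGS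

/-- Formulas of RAL#: each modality carries proponents A and resource-bounded opponents
B, and is either of the down-arrow (current endowment) kind or carries a fresh
endowment ζ. -/
inductive RALForm (Agt Res P : Type) : Type 1 where
  | prop : P → RALForm Agt Res P
  | neg : RALForm Agt Res P → RALForm Agt Res P
  | and : RALForm Agt Res P → RALForm Agt Res P → RALForm Agt Res P
  | nxtD : Set Agt → Set Agt → RALForm Agt Res P → RALForm Agt Res P
  | nxtE : Set Agt → Set Agt → (Agt → Res → ℕ) → RALForm Agt Res P → RALForm Agt Res P
  | untlD : Set Agt → Set Agt → RALForm Agt Res P → RALForm Agt Res P → RALForm Agt Res P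
  | untlE : Set Agt → Set Agt → (Agt → Res → ℕ) → RALForm Agt Res P → RALForm Agt Res P →
      RALForm Agt Res P
  | rlsD : Set Agt → Set Agt → RALForm Agt Res P → RALForm Agt Res P → RALForm Agt Res P
  | rlsE : Set Agt → Set Agt → (Agt → Res → ℕ) → RALForm Agt Res P → RALForm Agt Res P →
      RALForm Agt Res P

namespace RBCGS

variable {Agt S Act Res P : Type} [Inhabited S]

/-- Truth of a RAL# formula at a state and an endowment (`M, s, η ⊨ φ`). -/
def SatR (M : RBCGS Agt S Act Res) (V : P → S → Prop) :
    RALForm Agt Res P → S → Endow Agt Res → Prop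
  | .prop p, s, _ => V p s
  | .neg φ, s, η => ¬ SatR M V φ s η
  | .and φ ψ, s, η => SatR M V φ s η ∧ SatR M V ψ s η
  | .nxtD A B φ, s, η => ∃ F, M.Strategy A F ∧
      ∀ l ∈ M.ralOut A B F s η, 2 ≤ l.length ∧
        SatR M V φ (l.getD 1 default).1 (l.getD 1 default).2
  | .nxtE A B ζ φ, s, _ => ∃ F, M.Strategy A F ∧
      ∀ l ∈ M.ralOut A B F s ζ, 2 ≤ l.length ∧
        SatR M V φ (l.getD 1 default).1 (l.getD 1 default).2
  | .untlD A B φ ψ, s, η => ∃ F, M.Strategy A F ∧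
      ∀ l ∈ M.ralOut A B F s η, ∃ i < l.length,
        SatR M V ψ (l.getD i default).1 (l.getD i default).2 ∧
          ∀ j < i, SatR M V φ (l.getD j default).1 (l.getD j default).2
  | .untlE A B ζ φ ψ, s, _ => ∃ F, M.Strategy A F ∧
      ∀ l ∈ M.ralOut A B F s ζ, ∃ i < l.length,
        SatR M V ψ (l.getD i default).1 (l.getD i default).2 ∧
          ∀ j < i, SatR M V φ (l.getD j default).1 (l.getD j default).2
  | .rlsD A B φ ψ, s, η => ∃ F, M.Strategy A F ∧
      ∀ l ∈ M.ralOut A B F s η,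
        (∃ i < l.length,
          SatR M V φ (l.getD i default).1 (l.getD i default).2 ∧
          SatR M V ψ (l.getD i default).1 (l.getD i default).2 ∧
          ∀ j ≤ i, SatR M V ψ (l.getD j default).1 (l.getD j default).2) ∨
        (∀ j < l.length, SatR M V ψ (l.getD j default).1 (l.getD j default).2)
  | .rlsE A B ζ φ ψ, s, _ => ∃ F, M.Strategy A F ∧
      ∀ l ∈ M.ralOut A B F s ζ,
        (∃ i < l.length,
          SatR M V φ (l.getD i default).1 (l.getD i default).2 ∧
          SatR M V ψ (l.getD i default).1 (l.getD i default).2 ∧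
          ∀ j ≤ i, SatR M V ψ (l.getD j default).1 (l.getD j default).2) ∨
        (∀ j < l.length, SatR M V ψ (l.getD j default).1 (l.getD j default).2)

end RBCGS

/-- All proponent coalitions occurring in a RAL# formula are nonempty. -/
def RALForm.goodCoal {Agt Res P : Type} : RALForm Agt Res P → Prop
  | .prop _ => True
  | .neg φ => φ.goodCoal
  | .and φ ψ => φ.goodCoal ∧ ψ.goodCoal
  | .nxtD A _ φ => A.Nonempty ∧ φ.goodCoal
  | .nxtE A _ _ φ => A.Nonempty ∧ φ.goodCoal
  | .untlD A _ φ ψ => A.Nonempty ∧ φ.goodCoal ∧ ψ.goodCoal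
  | .untlE A _ _ φ ψ => A.Nonempty ∧ φ.goodCoal ∧ ψ.goodCoal
  | .rlsD A _ φ ψ => A.Nonempty ∧ φ.goodCoal ∧ ψ.goodCoal
  | .rlsE A _ _ φ ψ => A.Nonempty ∧ φ.goodCoal ∧ ψ.goodCoal


/-!
Every action consumes at least one unit of the diminishing resource and produces none, so along
a computation the endowment of that resource of each agent in `A ∪ B` strictly decreases; hence
computations from `s` have at most `η a res1 + 1` states. Each state–endowment pair has at most
`|Act| ^ |Agt|` successors, so there are only finitely many computations, and in a finite set of
computations every computation extends to one of maximal length.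
-/

namespace List

variable {α : Type*}

theorem IsChain.length_le_of_lt {g : α → ℕ} {l : List α} {x : α}
    (hl : l.IsChain fun x y => g y < g x) (hx : l.head? = some x) : l.length ≤ g x + 1 := by
  induction l generalizing x with
  | nil => simp
  | cons a t ih =>
    obtain rfl : a = x := by simpa using hx
    match t, hl with
    | [], _ => simp
    | b :: t, hl =>
      rw [isChain_cons_cons] at hl
      have := ih hl.2 rfl
      simp only [length_cons] at this ⊢
      omega

theorem finite_setOf_isChain_length_le {r : α → α → Prop} (hr : ∀ x, {y | r x y}.Finite)
    (n : ℕ) (x : α) :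
    {l : List α | l.IsChain r ∧ l.head? = some x ∧ l.length ≤ n}.Finite := by
  induction n generalizing x with
  | zero =>
    exact (Set.finite_singleton []).subset fun l h => by simpa using h.2.2
  | succ n ih =>
    refine ((Set.finite_singleton [x]).union
      ((hr x).biUnion fun y _ => (ih y).image (cons x))).subset ?_
    rintro (_ | ⟨a, t⟩) ⟨hchain, hhead, hlen⟩
    · simp at hhead
    obtain rfl : a = x := by simpa using hhead
    match t, hchain with
    | [], _ => exact Or.inl rfl
    | b :: t, hchain =>
      rw [isChain_cons_cons] at hchain
      exact Or.inr <|
        Set.mem_biUnion hchain.1 ⟨b :: t, ⟨hchain.2, rfl, by simpa using hlen⟩, rfl⟩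

theorem exists_prefix_maximal_of_finite {P : List α → Prop} (hP : {l | P l}.Finite) {l : List α}
    (hl : P l) : ∃ l', P l' ∧ l <+: l' ∧
      ¬ ∃ l'', l' <+: l'' ∧ l'.length < l''.length ∧ P l'' := by
  obtain ⟨l', ⟨hl', hpre⟩, hmax⟩ := Set.exists_max_image {l' | P l' ∧ l <+: l'} length
    (hP.subset fun _ h => h.1) ⟨l, hl, prefix_refl l⟩
  refine ⟨l', hl', hpre, ?_⟩
  rintro ⟨l'', hpre', hlen, hl''⟩
  exact (hmax l'' ⟨hl'', hpre.trans hpre'⟩).not_gt hlen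

end List

namespace RBCGS

variable {Agt S Act Res : Type} (M : RBCGS Agt S Act Res) (A B : Set Agt)

lemma one_le_consR_res1 {s : S} {a : Agt} {α : Act} (hα : α ∈ M.d s a) :
    1 ≤ M.consR s α M.res1 := by
  have := M.cost_first s a α hα
  rw [consR, min_eq_right (by omega)]
  omega

lemma prodR_res1 {s : S} {a : Agt} {α : Act} (hα : α ∈ M.d s a) : M.prodR s α M.res1 = 0 := by
  have := M.cost_first s a α hα
  rw [prodR, max_eq_left (by omega)]
  rfl

variable [Inhabited S]

open Classical in
/-- The truncated subtraction is harmless: `Transition` uses `step` only when the consumption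
does not exceed the endowment. -/
noncomputable def step (p : S × Endow Agt Res) (σ : Agt → Act) : S × Endow Agt Res :=
  ((M.tr p.1 σ).getD default, fun a ρ =>
    if a ∈ A ∪ B then p.2 a ρ + M.prodR p.1 (σ a) ρ - M.consR p.1 (σ a) ρ else p.2 a ρ)

def Transition (p q : S × Endow Agt Res) : Prop :=
  ∃ σ : Agt → Act, (∀ a, σ a ∈ M.d p.1 a) ∧
    (∀ a ∈ A ∪ B, ∀ ρ, M.consR p.1 (σ a) ρ ≤ p.2 a ρ) ∧ q = M.step A B p σ

lemma finite_setOf_transition [Finite Agt] [Finite Act] (p : S × Endow Agt Res) :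
    {q | M.Transition A B p q}.Finite :=
  (Set.finite_range (M.step A B p)).subset fun _ ⟨σ, _, _, hq⟩ => ⟨σ, hq.symm⟩

variable {M A B}

lemma Transition.res1_lt {p q : S × Endow Agt Res} (h : M.Transition A B p q) {a : Agt}
    (ha : a ∈ A ∪ B) : q.2 a M.res1 < p.2 a M.res1 := by
  obtain ⟨σ, hσ, hcons, rfl⟩ := h
  have := M.one_le_consR_res1 (hσ a)
  have := hcons a ha M.res1
  simp only [step, if_pos ha, M.prodR_res1 (hσ a)]
  omega

variable {F : List S → Agt → Act} {s : S} {η : Endow Agt Res} {l : List (S × Endow Agt Res)}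

lemma RalComp.head? (hl : M.RalComp A B F s η l) : l.head? = some (s, η) := by
  obtain ⟨hne, h0, -⟩ := hl
  rw [List.head?_eq_getElem?, ← h0, List.getD_eq_getElem _ _ (List.length_pos_iff.2 hne)]
  exact List.getElem?_eq_getElem _

lemma RalComp.isChain (hl : M.RalComp A B F s η l) : l.IsChain (M.Transition A B) := by
  rw [List.isChain_iff_getElem]
  intro i hi
  obtain ⟨σ, hσ, -, htr, hcons, hupd, hfix⟩ := hl.2.2 i hi
  simp only [List.getD_eq_getElem _ _ hi, List.getD_eq_getElem _ _ (Nat.lt_of_succ_lt hi)]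
    at hσ htr hcons hupd hfix
  refine ⟨σ, hσ, hcons, Prod.ext (by simp [step, htr]) (funext₂ fun a ρ => ?_)⟩
  by_cases ha : a ∈ A ∪ B
  · have := hupd a ha ρ
    have := hcons a ha ρ
    simp only [step, if_pos ha]
    omega
  · simp only [step, if_neg ha, hfix a ha ρ]

lemma RalComp.length_le (hl : M.RalComp A B F s η l) {a : Agt} (ha : a ∈ A ∪ B) :
    l.length ≤ η a M.res1 + 1 :=
  (hl.isChain.imp fun _ _ h => h.res1_lt ha).length_le_of_lt (g := fun p => p.2 a M.res1) hl.head?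

variable (M A B F s η) in
lemma ralComp_singleton : M.RalComp A B F s η [(s, η)] :=
  ⟨List.cons_ne_nil _ _, rfl, fun _ h => absurd h (by simp)⟩

variable (F s η) in
lemma finite_setOf_ralComp [Finite Agt] [Finite Act] (hAB : (A ∪ B).Nonempty) :
    {l | M.RalComp A B F s η l}.Finite := by
  obtain ⟨a, ha⟩ := hAB
  exact (List.finite_setOf_isChain_length_le (M.finite_setOf_transition A B)
    (η a M.res1 + 1) (s, η)).subset fun l hl => ⟨hl.isChain, hl.head?, hl.length_le ha⟩

lemma exists_mem_ralOut_prefix [Finite Agt] [Finite Act] (hAB : (A ∪ B).Nonempty)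
    (hl : M.RalComp A B F s η l) : ∃ l' ∈ M.ralOut A B F s η, l <+: l' := by
  obtain ⟨l', hl', hpre, hmax⟩ :=
    List.exists_prefix_maximal_of_finite (M.finite_setOf_ralComp F s η hAB) hl
  exact ⟨l', ⟨hl', hmax⟩, hpre⟩

end RBCGS

theorem ral_out_finite_nonempty_general {Agt S Act Res : Type} [Inhabited S]
    [Fintype Agt] [Fintype Act]
    (M : RBCGS Agt S Act Res) (A B : Set Agt) (hAB : (A ∪ B).Nonempty)
    (F : List S → Agt → Act)
    (η : RBCGS.Endow Agt Res) (s : S) :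
    (M.ralOut A B F s η).Finite ∧ (M.ralOut A B F s η).Nonempty ∧
      ∀ l : List (S × RBCGS.Endow Agt Res), M.RalComp A B F s η l →
        ∃ l' ∈ M.ralOut A B F s η, l <+: l' := by
  obtain ⟨l, hl, -⟩ := RBCGS.exists_mem_ralOut_prefix hAB (M.ralComp_singleton A B F s η)
  exact ⟨(M.finite_setOf_ralComp F s η hAB).subset fun _ h => h.1, ⟨l, hl⟩,
    fun _ => RBCGS.exists_mem_ralOut_prefix hAB⟩

/-- Finiteness and nonemptiness of RAL# outcome sets (Act finite): the set
of maximal (η, F_A, B)-computations from s is finite and nonempty and every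
(η, F_A, B)-computation from s is a prefix of some member of it. -/
theorem ral_out_finite_nonempty {Agt S Act Res : Type} [Inhabited S]
    [Fintype Agt] [Fintype Act]
    (M : RBCGS Agt S Act Res) (A B : Set Agt) (hAB : (A ∪ B).Nonempty)
    (F : List S → Agt → Act) (hF : M.Strategy A F)
    (η : RBCGS.Endow Agt Res) (s : S) :
    (M.ralOut A B F s η).Finite ∧ (M.ralOut A B F s η).Nonempty ∧
      ∀ l : List (S × RBCGS.Endow Agt Res), M.RalComp A B F s η l →
        ∃ l' ∈ M.ralOut A B F s η, l <+: l' :=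
  ral_out_finite_nonempty_general M A B hAB F η s
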